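/- arXiv:1202.4246 — 4 statements merged into one kernel-verified Lean document; each statement's English description precedes it below -/
import Mathlib

section
/- Let n ≥ 1, let S_1, …, S_n be nonempty finite sets, and let ν = ν_1 ⊗ … ⊗ ν_n and π = π_1 ⊗ … ⊗ π_n be product probability measures on S_1 × … × S_n, where each π_i is everywhere positive. Set M = Σ_{i=1}^n ‖ν_i − π_i‖²_{L²(π_i)}. Then ‖ν − π‖_TV ≤ √M. -/
set_option maxHeartbeats 1000000

noncomputable section

theorem stmt_0 (n : ℕ) (hn : 1 ≤ n) (S : Fin n → Type*) [∀ i, Fintype (S i)]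
    [∀ i, Nonempty (S i)]
    (ν π : ∀ i, S i → ℝ)
    (hν0 : ∀ i x, 0 ≤ ν i x) (hν1 : ∀ i, ∑ x, ν i x = 1)
    (hπ0 : ∀ i x, 0 < π i x) (hπ1 : ∀ i, ∑ x, π i x = 1) :
    (1 / 2) * ∑ x : (∀ i, S i), |(∏ i, ν i (x i)) - (∏ i, π i (x i))| ≤
      Real.sqrt (∑ i, ∑ x, |ν i x / π i x - 1| ^ 2 * π i x) := by
  classical
  set a : Fin n → ℝ := fun i => ∑ x, |ν i x / π i x - 1| ^ 2 * π i x with ha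
  set M : ℝ := ∑ i, a i with hM
  have ha0 : ∀ i, 0 ≤ a i := fun i => Finset.sum_nonneg fun x _ =>
    mul_nonneg (pow_nonneg (abs_nonneg _) 2) (hπ0 i x).le
  have hM0 : 0 ≤ M := Finset.sum_nonneg fun i _ => ha0 i
  set P : (∀ i, S i) → ℝ := fun x => ∏ i, ν i (x i) with hP
  set Q : (∀ i, S i) → ℝ := fun x => ∏ i, π i (x i) with hQ
  have hP0 : ∀ x, 0 ≤ P x := fun x => Finset.prod_nonneg fun i _ => hν0 i (x i)
  have hQ0 : ∀ x, 0 < Q x := fun x => Finset.prod_pos fun i _ => hπ0 i (x i)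
  have hsumP : ∑ x : (∀ i, S i), P x = 1 := by
    rw [hP, ← Fintype.prod_sum]
    simp [hν1]
  have hsumQ : ∑ x : (∀ i, S i), Q x = 1 := by
    rw [hQ, ← Fintype.prod_sum]
    simp [hπ1]
  have habs0 : 0 ≤ ∑ x : (∀ i, S i), |P x - Q x| :=
    Finset.sum_nonneg fun x _ => abs_nonneg _
  by_cases hM1 : 1 ≤ M
  · have h2 : ∑ x : (∀ i, S i), |P x - Q x| ≤ 2 := by
      have : ∑ x : (∀ i, S i), |P x - Q x| ≤ ∑ x : (∀ i, S i), (P x + Q x) := by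
        refine Finset.sum_le_sum fun x _ => ?_
        have := hP0 x; have := (hQ0 x).le
        exact abs_le.mpr ⟨by linarith, by linarith⟩
      rw [Finset.sum_add_distrib, hsumP, hsumQ] at this
      linarith
    have h3 : (1 : ℝ) ≤ Real.sqrt M := by
      rw [show (1 : ℝ) = Real.sqrt 1 by simp]
      exact Real.sqrt_le_sqrt hM1
    calc (1 / 2) * ∑ x : (∀ i, S i), |P x - Q x| ≤ (1/2) * 2 := by linarith
      _ = 1 := by norm_num
      _ ≤ Real.sqrt M := h3
  · push_neg at hM1
    -- per-coordinate second moment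
    have hratio : ∀ i, ∑ x, (ν i x) ^ 2 / π i x = 1 + a i := by
      intro i
      have hx : ∀ x, |ν i x / π i x - 1| ^ 2 * π i x
          = (ν i x) ^ 2 / π i x - 2 * ν i x + π i x := by
        intro x
        have hp := (hπ0 i x).ne'
        rw [sq_abs]
        field_simp
        ring
      have : a i = ∑ x, ((ν i x) ^ 2 / π i x - 2 * ν i x + π i x) := by
        rw [ha]; exact Finset.sum_congr rfl fun x _ => hx x
      simp only [Finset.sum_add_distrib, Finset.sum_sub_distrib, ← Finset.mul_sum,
        hν1, hπ1] at this
      linarith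
    have hPQ : ∑ x : (∀ i, S i), (P x) ^ 2 / Q x = ∏ i, (1 + a i) := by
      have hpt : ∀ x : (∀ i, S i), (P x) ^ 2 / Q x = ∏ i, (ν i (x i)) ^ 2 / π i (x i) := by
        intro x
        rw [hP, hQ, ← Finset.prod_pow, ← Finset.prod_div_distrib]
      calc ∑ x : (∀ i, S i), (P x) ^ 2 / Q x
          = ∑ x : (∀ i, S i), ∏ i, (ν i (x i)) ^ 2 / π i (x i) :=
            Finset.sum_congr rfl fun x _ => hpt x
        _ = ∏ i, ∑ x, (ν i x) ^ 2 / π i x := (Fintype.prod_sum (fun i (x : S i) => (ν i x) ^ 2 / π i x)).symm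
        _ = ∏ i, (1 + a i) := Finset.prod_congr rfl fun i _ => hratio i
    -- chi-square of the product
    have hchisq : ∑ x : (∀ i, S i), (P x - Q x) ^ 2 / Q x = ∏ i, (1 + a i) - 1 := by
      have hx : ∀ x : (∀ i, S i), (P x - Q x) ^ 2 / Q x
          = (P x) ^ 2 / Q x - 2 * P x + Q x := by
        intro x
        have hq := (hQ0 x).ne'
        field_simp
        ring
      calc ∑ x : (∀ i, S i), (P x - Q x) ^ 2 / Q x
          = ∑ x : (∀ i, S i), ((P x) ^ 2 / Q x - 2 * P x + Q x) :=
            Finset.sum_congr rfl fun x _ => hx x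
        _ = (∑ x : (∀ i, S i), (P x) ^ 2 / Q x) - 2 * (∑ x : (∀ i, S i), P x)
              + ∑ x : (∀ i, S i), Q x := by
            rw [Finset.sum_add_distrib, Finset.sum_sub_distrib, Finset.mul_sum]
        _ = ∏ i, (1 + a i) - 1 := by rw [hPQ, hsumP, hsumQ]; ring
    -- Cauchy-Schwarz
    have hCS : (∑ x : (∀ i, S i), |P x - Q x|) ^ 2 ≤ ∏ i, (1 + a i) - 1 := by
      have := Finset.sum_mul_sq_le_sq_mul_sq Finset.univ
        (fun x : (∀ i, S i) => |P x - Q x| / Real.sqrt (Q x))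
        (fun x : (∀ i, S i) => Real.sqrt (Q x))
      have h1 : ∀ x : (∀ i, S i),
          |P x - Q x| / Real.sqrt (Q x) * Real.sqrt (Q x) = |P x - Q x| := by
        intro x
        rw [div_mul_cancel₀]
        exact (Real.sqrt_pos.mpr (hQ0 x)).ne'
      have h2 : ∀ x : (∀ i, S i),
          (|P x - Q x| / Real.sqrt (Q x)) ^ 2 = (P x - Q x) ^ 2 / Q x := by
        intro x
        rw [div_pow, sq_abs, Real.sq_sqrt (hQ0 x).le]
      have h3 : ∀ x : (∀ i, S i), (Real.sqrt (Q x)) ^ 2 = Q x := fun x =>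
        Real.sq_sqrt (hQ0 x).le
      simp only [h1, h2, h3] at this
      rw [hsumQ, mul_one, hchisq] at this
      exact this
    -- product bound via exp
    have hprod : ∏ i, (1 + a i) ≤ Real.exp M := by
      calc ∏ i, (1 + a i) ≤ ∏ i, Real.exp (a i) := by
            refine Finset.prod_le_prod (fun i _ => by linarith [ha0 i]) fun i _ => ?_
            have := Real.add_one_le_exp (a i)
            linarith
        _ = Real.exp M := by rw [← Real.exp_sum]
    have hexp : Real.exp M - 1 ≤ 2 * M := by
      have habsM : |M| ≤ 1 := by rw [abs_of_nonneg hM0]; linarith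
      have := Real.abs_exp_sub_one_le habsM
      rw [abs_of_nonneg hM0] at this
      calc Real.exp M - 1 ≤ |Real.exp M - 1| := le_abs_self _
        _ ≤ 2 * M := this
    -- conclude
    have hfin : ((1 / 2) * ∑ x : (∀ i, S i), |P x - Q x|) ^ 2 ≤ M := by
      have : (∑ x : (∀ i, S i), |P x - Q x|) ^ 2 ≤ 2 * M := by
        calc (∑ x : (∀ i, S i), |P x - Q x|) ^ 2 ≤ ∏ i, (1 + a i) - 1 := hCS
          _ ≤ Real.exp M - 1 := by linarith
          _ ≤ 2 * M := hexp
      calc ((1 / 2) * ∑ x : (∀ i, S i), |P x - Q x|) ^ 2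
          = (1 / 4) * (∑ x : (∀ i, S i), |P x - Q x|) ^ 2 := by ring
        _ ≤ (1 / 4) * (2 * M) := by linarith
        _ ≤ M := by linarith
    have h0 : 0 ≤ (1 / 2) * ∑ x : (∀ i, S i), |P x - Q x| := by linarith
    calc (1 / 2) * ∑ x : (∀ i, S i), |P x - Q x|
        = Real.sqrt (((1 / 2) * ∑ x : (∀ i, S i), |P x - Q x|) ^ 2) :=
          (Real.sqrt_sq h0).symm
      _ ≤ Real.sqrt M := Real.sqrt_le_sqrt hfin
end
end

section
/- Let n ≥ 1, let S_1, …, S_n be nonempty finite sets, and let ν = ν_1 ⊗ … ⊗ ν_n and π = π_1 ⊗ … ⊗ π_n be product probability measures on S_1 × … × S_n, where each π_i is everywhere positive. Then 1 + ‖ν − π‖²_{L²(π)} = ∏_{i=1}^n ( 1 + ‖ν_i − π_i‖²_{L²(π_i)} ), and consequently, with M = Σ_{i=1}^n ‖ν_i − π_i‖²_{L²(π_i)}, one has ‖ν − π‖_TV ≤ (1/2)·√(e^M − 1). -/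
noncomputable section

theorem stmt_1 (n : ℕ) (hn : 1 ≤ n) (S : Fin n → Type*) [∀ i, Fintype (S i)]
    [∀ i, Nonempty (S i)]
    (ν π : ∀ i, S i → ℝ)
    (hν0 : ∀ i x, 0 ≤ ν i x) (hν1 : ∀ i, ∑ x, ν i x = 1)
    (hπ0 : ∀ i x, 0 < π i x) (hπ1 : ∀ i, ∑ x, π i x = 1) :
    (1 + ∑ x : (∀ i, S i),
        |(∏ i, ν i (x i)) / (∏ i, π i (x i)) - 1| ^ 2 * ∏ i, π i (x i)) =
      (∏ i, (1 + ∑ x, |ν i x / π i x - 1| ^ 2 * π i x)) ∧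
    (1 / 2) * ∑ x : (∀ i, S i), |(∏ i, ν i (x i)) - (∏ i, π i (x i))| ≤
      (1 / 2) * Real.sqrt
        (Real.exp (∑ i, ∑ x, |ν i x / π i x - 1| ^ 2 * π i x) - 1) := by
  have expand : ∀ (a b : ℝ), 0 < b → |a / b - 1| ^ 2 * b = a ^ 2 / b - 2 * a + b := by
    intro a b hb
    rw [sq_abs]
    field_simp
    ring
  set A : Fin n → ℝ := fun i => ∑ x, |ν i x / π i x - 1| ^ 2 * π i x with hA
  have hAnn : ∀ i, 0 ≤ A i := fun i =>
    Finset.sum_nonneg fun x _ => mul_nonneg (sq_nonneg _) (hπ0 i x).le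
  have hAi : ∀ i, 1 + A i = ∑ x, (ν i x) ^ 2 / π i x := by
    intro i
    have h1 : A i = (∑ x, (ν i x) ^ 2 / π i x) - 2 * (∑ x, ν i x) + ∑ x, π i x := by
      rw [hA]
      dsimp only
      rw [Finset.mul_sum, ← Finset.sum_sub_distrib, ← Finset.sum_add_distrib]
      exact Finset.sum_congr rfl fun x _ => expand _ _ (hπ0 i x)
    rw [h1, hν1 i, hπ1 i]
    ring
  -- sums of products over the pi type
  have sum_prod : ∀ (f : ∀ i, S i → ℝ),
      ∑ x : (∀ i, S i), ∏ i, f i (x i) = ∏ i, ∑ y, f i y :=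
    fun f => (Fintype.prod_sum f).symm
  have hπprod : ∀ x : (∀ i, S i), 0 < ∏ i, π i (x i) :=
    fun x => Finset.prod_pos fun i _ => hπ0 i (x i)
  -- the main identity
  have main : (1 + ∑ x : (∀ i, S i),
      |(∏ i, ν i (x i)) / (∏ i, π i (x i)) - 1| ^ 2 * ∏ i, π i (x i)) =
      ∏ i, (1 + A i) := by
    have h1 : ∀ x : (∀ i, S i),
        |(∏ i, ν i (x i)) / (∏ i, π i (x i)) - 1| ^ 2 * ∏ i, π i (x i) =
          (∏ i, (ν i (x i)) ^ 2 / π i (x i)) - 2 * (∏ i, ν i (x i)) + ∏ i, π i (x i) := by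
      intro x
      rw [expand _ _ (hπprod x)]
      rw [← Finset.prod_pow, ← Finset.prod_div_distrib]
    rw [Finset.sum_congr rfl fun x _ => h1 x]
    rw [Finset.sum_add_distrib, Finset.sum_sub_distrib, ← Finset.mul_sum]
    rw [sum_prod (fun i y => (ν i y) ^ 2 / π i y), sum_prod ν, sum_prod π]
    have : (∏ i, ∑ y, ν i y) = 1 := by
      rw [Finset.prod_congr rfl fun i _ => hν1 i]; simp
    rw [this]
    have : (∏ i, ∑ y, π i y) = 1 := by
      rw [Finset.prod_congr rfl fun i _ => hπ1 i]; simp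
    rw [this]
    rw [Finset.prod_congr rfl fun i _ => hAi i]
    ring
  refine ⟨main, ?_⟩
  -- second part
  set L : ℝ := ∑ x : (∀ i, S i),
      |(∏ i, ν i (x i)) / (∏ i, π i (x i)) - 1| ^ 2 * ∏ i, π i (x i) with hL
  have hLnn : 0 ≤ L :=
    Finset.sum_nonneg fun x _ => mul_nonneg (sq_nonneg _) (hπprod x).le
  set T : ℝ := ∑ x : (∀ i, S i), |(∏ i, ν i (x i)) - (∏ i, π i (x i))| with hT
  have hTnn : 0 ≤ T := Finset.sum_nonneg fun x _ => abs_nonneg _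
  -- Cauchy-Schwarz : T^2 ≤ L
  have hCS : T ^ 2 ≤ L := by
    have := Finset.sum_mul_sq_le_sq_mul_sq Finset.univ
      (fun x : (∀ i, S i) =>
        |(∏ i, ν i (x i)) / (∏ i, π i (x i)) - 1| * Real.sqrt (∏ i, π i (x i)))
      (fun x : (∀ i, S i) => Real.sqrt (∏ i, π i (x i)))
    have e1 : ∀ x : (∀ i, S i),
        (|(∏ i, ν i (x i)) / (∏ i, π i (x i)) - 1| * Real.sqrt (∏ i, π i (x i))) *
          Real.sqrt (∏ i, π i (x i)) =
          |(∏ i, ν i (x i)) - (∏ i, π i (x i))| := by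
      intro x
      rw [mul_assoc, Real.mul_self_sqrt (hπprod x).le]
      rw [show |(∏ i, ν i (x i)) / (∏ i, π i (x i)) - 1| * (∏ i, π i (x i)) =
          |((∏ i, ν i (x i)) / (∏ i, π i (x i)) - 1) * (∏ i, π i (x i))| by
        rw [abs_mul, abs_of_pos (hπprod x)]]
      congr 1
      rw [sub_mul, div_mul_cancel₀ _ (hπprod x).ne', one_mul]
    have e2 : ∀ x : (∀ i, S i),
        (|(∏ i, ν i (x i)) / (∏ i, π i (x i)) - 1| * Real.sqrt (∏ i, π i (x i))) ^ 2 =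
          |(∏ i, ν i (x i)) / (∏ i, π i (x i)) - 1| ^ 2 * ∏ i, π i (x i) := by
      intro x
      rw [mul_pow, Real.sq_sqrt (hπprod x).le]
    have e3 : ∀ x : (∀ i, S i), (Real.sqrt (∏ i, π i (x i))) ^ 2 = ∏ i, π i (x i) :=
      fun x => Real.sq_sqrt (hπprod x).le
    rw [Finset.sum_congr rfl fun x _ => e1 x, Finset.sum_congr rfl fun x _ => e2 x,
      Finset.sum_congr rfl fun x _ => e3 x] at this
    rw [sum_prod π, Finset.prod_congr rfl fun i _ => hπ1 i] at this
    simpa [hT, hL, sq_abs] using this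
  -- L ≤ exp (∑ A) - 1
  have hLe : L ≤ Real.exp (∑ i, A i) - 1 := by
    have hmain' : L = (∏ i, (1 + A i)) - 1 := by linarith [main]
    rw [hmain']
    have hprod : (∏ i, (1 + A i)) ≤ Real.exp (∑ i, A i) := by
      rw [Real.exp_sum]
      exact Finset.prod_le_prod (fun i _ => by linarith [hAnn i])
        (fun i _ => by linarith [Real.add_one_le_exp (A i)])
    linarith
  have hTle : T ≤ Real.sqrt (Real.exp (∑ i, A i) - 1) := by
    have : T = Real.sqrt (T ^ 2) := (Real.sqrt_sq hTnn).symm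
    rw [this]
    exact Real.sqrt_le_sqrt (hCS.trans hLe)
  have h12 : (0:ℝ) ≤ 1 / 2 := by norm_num
  exact mul_le_mul_of_nonneg_left hTle h12
end
end

section
/- Let m > 0 and let Z be a real Gaussian random variable with mean −m/2 and variance m. Then E[ max(1 − e^Z, 0) ] = 2Φ(√m / 2) − 1, where Φ is the cumulative distribution function of the standard normal distribution. -/
/-!
The integrand is `1 - exp z` on `{z ≤ 0}` and vanishes elsewhere. Multiplying a Gaussian density
by `exp z` completes the square, `exp z · φ_{μ,v}(z) = exp (μ + v/2) · φ_{μ+v,v}(z)`, so for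
`μ = -m/2`, `v = m` the exponential part is the `N(m/2, m)`-probability of `{z ≤ 0}`, namely
`Φ(-√m/2)`, while the constant part is `Φ(√m/2)`. The symmetry `Φ(-a) = 1 - Φ(a)` concludes.
-/

noncomputable section

open ProbabilityTheory

/-- The cumulative distribution function of the standard normal distribution. -/
def stdNormalCDF (x : ℝ) : ℝ := (gaussianReal 0 1 (Set.Iic x)).toReal

open MeasureTheory Real Set
open scoped NNReal

lemma integral_max_one_sub_exp_zero (μ : Measure ℝ) [IsFiniteMeasure μ] :
    ∫ z, max (1 - exp z) 0 ∂μ = μ.real (Iic 0) - ∫ z in Iic 0, exp z ∂μ := by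
  have h_indicator : (fun z ↦ max (1 - exp z) 0) = (Iic 0).indicator (fun z ↦ 1 - exp z) := by
    ext z
    by_cases hz : z ≤ 0
    · simp [indicator_of_mem (mem_Iic.mpr hz), exp_le_one_iff.mpr hz]
    · simp [indicator_of_notMem (notMem_Iic.mpr (not_le.mp hz)), one_le_exp (not_le.mp hz).le]
  have h_exp : IntegrableOn exp (Iic 0) μ := by
    refine Measure.integrableOn_of_bounded (M := 1) (measure_ne_top _ _)
      continuous_exp.aestronglyMeasurable ?_
    filter_upwards [ae_restrict_mem measurableSet_Iic] with z hz
    simpa [abs_of_pos (exp_pos z)] using hz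
  rw [h_indicator, integral_indicator measurableSet_Iic,
    integral_sub (integrable_const 1) h_exp, setIntegral_const, smul_eq_mul,
    mul_one]

lemma exp_mul_gaussianPDFReal (μ : ℝ) (v : ℝ≥0) (x : ℝ) :
    exp x * gaussianPDFReal μ v x = exp (μ + v / 2) * gaussianPDFReal (μ + v) v x := by
  rcases eq_or_ne v 0 with rfl | hv
  · simp [gaussianPDFReal_zero_var]
  simp only [gaussianPDFReal]
  rw [mul_left_comm, ← exp_add, mul_left_comm, ← exp_add]
  congr 2
  field_simp
  ring

lemma setIntegral_exp_gaussianReal (μ : ℝ) {v : ℝ≥0} (hv : v ≠ 0) {s : Set ℝ}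
    (hs : MeasurableSet s) :
    ∫ x in s, exp x ∂gaussianReal μ v = exp (μ + v / 2) * (gaussianReal (μ + v) v).real s := by
  rw [← integral_indicator hs, integral_gaussianReal_eq_integral_smul hv]
  simp_rw [smul_eq_mul, ← indicator_mul_right]
  rw [integral_indicator hs]
  simp_rw [mul_comm (gaussianPDFReal μ v _), exp_mul_gaussianPDFReal]
  rw [integral_const_mul, measureReal_def, gaussianReal_apply_eq_integral _ hv,
    ENNReal.toReal_ofReal (setIntegral_nonneg hs fun x _ ↦ gaussianPDFReal_nonneg _ _ x)]

lemma gaussianReal_real_Iic (μ : ℝ) {v : ℝ≥0} (hv : v ≠ 0) (x : ℝ) :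
    (gaussianReal μ v).real (Iic x) = stdNormalCDF ((x - μ) / √v) := by
  have hσ : 0 < √(v : ℝ) := sqrt_pos.mpr (NNReal.coe_pos.mpr (pos_iff_ne_zero.mpr hv))
  have h_std : (gaussianReal μ v).map (fun z ↦ (z - μ) / √v) = gaussianReal 0 1 := by
    rw [show (fun z ↦ (z - μ) / √v) = (· / √v) ∘ (· - μ) from rfl,
      ← Measure.map_map (by fun_prop) (by fun_prop), gaussianReal_map_sub_const,
      gaussianReal_map_div_const, sub_self, zero_div]
    congr 1
    ext
    simp [sq_sqrt v.coe_nonneg, hv]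
  have h_preimage : (fun z ↦ (z - μ) / √v) ⁻¹' Iic ((x - μ) / √v) = Iic x := by
    ext z
    simp [div_le_div_iff_of_pos_right hσ]
  rw [stdNormalCDF, ← h_std, Measure.map_apply (by fun_prop) measurableSet_Iic, h_preimage,
    measureReal_def]

lemma stdNormalCDF_neg (a : ℝ) : stdNormalCDF (-a) = 1 - stdNormalCDF a := by
  have h_symm : (gaussianReal 0 1).map (fun x ↦ -x) = gaussianReal 0 1 := by
    rw [gaussianReal_map_neg, neg_zero]
  have := nullSingletonClass_gaussianReal (μ := 0) one_ne_zero
  have h_preimage : (fun x ↦ -x) ⁻¹' Iic (-a) = Ici a := by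
    ext x
    simp
  rw [stdNormalCDF, ← h_symm, Measure.map_apply (by fun_prop) measurableSet_Iic, h_preimage,
    ← measureReal_def, measureReal_congr Ioi_ae_eq_Ici.symm, ← compl_Iic,
    probReal_compl_eq_one_sub measurableSet_Iic, stdNormalCDF, measureReal_def]

theorem stmt_3 (m : ℝ) (hm : 0 < m) :
    ∫ z, max (1 - Real.exp z) 0 ∂(gaussianReal (-m / 2) (Real.toNNReal m)) =
      2 * stdNormalCDF (Real.sqrt m / 2) - 1 := by
  have hv : m.toNNReal ≠ 0 := by simpa using hm
  have h_arg : (0 - -m / 2) / √m = √m / 2 := by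
    field_simp
    rw [sq_sqrt hm.le]
    ring
  rw [integral_max_one_sub_exp_zero, setIntegral_exp_gaussianReal _ hv measurableSet_Iic,
    gaussianReal_real_Iic _ hv, gaussianReal_real_Iic _ hv, coe_toNNReal m hm.le,
    show -m / 2 + m / 2 = 0 by ring, exp_zero, one_mul, h_arg,
    show (0 - (-m / 2 + m)) / √m = -(√m / 2) by rw [← h_arg]; ring, stdNormalCDF_neg]
  ring
end
end

section
/- Let Σ and V be nonempty finite sets, let (W, 𝒲, P) be a probability space, and let g : W → (Σ^V → Σ^V) be such that for every w ∈ W there are a subset Λ_w ⊆ V and a function f_w : Σ^{Λ_w} → Σ^V with g(w)(x) = f_w(x|_{Λ_w}) for all x ∈ Σ^V; assume w ↦ g(w) and w ↦ Λ_w are measurable (the target sets being finite, equipped with the discrete σ-algebra). Then for any probability distributions φ and ψ on Σ^V, ‖ ∫ (g(w))_*φ dP(w) − ∫ (g(w))_*ψ dP(w) ‖_TV ≤ ∫ ‖ φ|_{Λ_w} − ψ|_{Λ_w} ‖_TV dP(w). -/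
/-!
Writing `d = φ - ψ`, both sides are integrals over `w` (the left one after moving `|·|` inside
the integral), so it suffices to compare the integrands for a fixed `w`. Since `G = g w` only reads
the coordinates in `L = Λ w`, it factors as `G = f ∘ restrict L`, so the pushforward of `d` under `G`
is the pushforward under `f` of the marginal of `d` on `S^L`; and a pushforward never increases the
`ℓ¹` norm of a signed measure.
-/

open MeasureTheory Finset

section Fiberwise

variable {α β γ : Type*} [Fintype α] [Fintype γ] [DecidableEq β] [DecidableEq γ]

theorem sum_ite_sub_sum_ite (p : α → Prop) [DecidablePred p] (φ ψ : α → ℝ) :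
    (∑ a, if p a then φ a else 0) - ∑ a, (if p a then ψ a else 0) =
      ∑ a, if p a then φ a - ψ a else 0 := by
  rw [← sum_sub_distrib]
  simp only [ite_sub_ite, sub_zero]

theorem sum_abs_sum_fiber_le [Fintype β] (f : α → β) (d : α → ℝ) :
    ∑ b, |∑ a, if f a = b then d a else 0| ≤ ∑ a, |d a| :=
  calc ∑ b, |∑ a, if f a = b then d a else 0|
      ≤ ∑ b, ∑ a, |if f a = b then d a else 0| := sum_le_sum fun b _ => abs_sum_le_sum_abs _ _
    _ = ∑ a, |d a| := by
      rw [sum_comm]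
      simp only [apply_ite, abs_zero, sum_ite_eq, mem_univ, if_true]

theorem sum_fiber_comp (r : α → γ) (f : γ → β) (d : α → ℝ) (b : β) :
    ∑ a, (if f (r a) = b then d a else 0) =
      ∑ c, if f c = b then ∑ a, (if r a = c then d a else 0) else 0 :=
  calc ∑ a, (if f (r a) = b then d a else 0)
      = ∑ a, ∑ c, if r a = c ∧ f c = b then d a else 0 := by
        simp only [ite_and, sum_ite_eq, mem_univ, if_true]
    _ = _ := by
        rw [sum_comm]
        simp only [and_comm (a := r _ = _), ite_and, sum_ite_irrel, sum_const_zero]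

theorem sum_abs_sum_fiber_le_of_factorsThrough [Fintype β] [Nonempty β] {G : α → β}
    {r : α → γ} (hG : G.FactorsThrough r) (d : α → ℝ) :
    ∑ b, |∑ a, if G a = b then d a else 0| ≤ ∑ c, |∑ a, if r a = c then d a else 0| := by
  have hfac : ∀ a, G a = Function.extend r G (fun _ => Classical.arbitrary β) (r a) :=
    fun a => (hG.extend_apply _ a).symm
  simp only [hfac, sum_fiber_comp r]
  exact sum_abs_sum_fiber_le _ _

end Fiberwise

theorem integrable_comp_of_measurable_top {W β : Type*} [MeasurableSpace W] {P : Measure W}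
    [IsFiniteMeasure P] [Finite β] {f : W → β} (hf : @Measurable W β _ ⊤ f) (h : β → ℝ) :
    Integrable (fun w => h (f w)) P := by
  obtain ⟨C, hC⟩ := (Set.finite_range fun b => ‖h b‖).bddAbove
  exact .of_bound ((@measurable_from_top _ _ _ h).comp hf).aestronglyMeasurable C
    (ae_of_all _ fun w => hC ⟨f w, rfl⟩)

theorem sum_abs_pushforward_sub_le_marginal {S V : Type*} [Fintype S] [Fintype V] [Nonempty S]
    [DecidableEq S] [DecidableEq V] (G : (V → S) → (V → S)) (L : Finset V)
    (hG : ∀ x y : V → S, (∀ v ∈ L, x v = y v) → G x = G y) (φ ψ : (V → S) → ℝ) :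
    ∑ z, |(∑ x, if G x = z then φ x else 0) - ∑ x, if G x = z then ψ x else 0| ≤
      ∑ η : {v // v ∈ L} → S,
        |(∑ x : V → S, if (∀ v : {v // v ∈ L}, x v.1 = η v) then φ x else 0) -
          ∑ x : V → S, if (∀ v : {v // v ∈ L}, x v.1 = η v) then ψ x else 0| := by
  have hrestrict : ∀ (x : V → S) η, (∀ v : {v // v ∈ L}, x v.1 = η v) ↔ L.restrict x = η :=
    fun x η => funext_iff.symm
  simp only [sum_ite_sub_sum_ite, hrestrict]
  exact sum_abs_sum_fiber_le_of_factorsThrough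
    (fun x y hxy => hG x y fun v hv => congrFun hxy ⟨v, hv⟩) _

theorem stmt_4_general {W : Type*} [MeasurableSpace W] (P : Measure W) [IsProbabilityMeasure P]
    {S V : Type*} [Fintype S] [Fintype V] [Nonempty S]
    [DecidableEq S] [DecidableEq V]
    (g : W → (V → S) → (V → S)) (Λ : W → Finset V)
    (hg : @Measurable W ((V → S) → (V → S)) _ ⊤ g)
    (hΛ : @Measurable W (Finset V) _ ⊤ Λ)
    (hsupp : ∀ w, ∀ x y : V → S, (∀ v ∈ Λ w, x v = y v) → g w x = g w y)
    (φ ψ : (V → S) → ℝ) :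
    (1 / 2) * ∑ z : V → S,
        |(∫ w, (∑ x : V → S, if g w x = z then φ x else 0) ∂P) -
          (∫ w, (∑ x : V → S, if g w x = z then ψ x else 0) ∂P)| ≤
      ∫ w, (1 / 2) * ∑ η : {v // v ∈ Λ w} → S,
          |(∑ x : V → S, if (∀ v : {v // v ∈ Λ w}, x v.1 = η v) then φ x else 0) -
            (∑ x : V → S, if (∀ v : {v // v ∈ Λ w}, x v.1 = η v) then ψ x else 0)| ∂P := by
  have hint : ∀ (c : (V → S) → ℝ) z,
      Integrable (fun w => ∑ x, if g w x = z then c x else 0) P :=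
    fun c z => integrable_comp_of_measurable_top hg fun G => ∑ x, if G x = z then c x else 0
  have hint_abs : ∀ z, Integrable (fun w => |(∑ x, if g w x = z then φ x else 0) -
      ∑ x, if g w x = z then ψ x else 0|) P :=
    fun z => ((hint φ z).sub (hint ψ z)).abs
  calc (1 / 2) * ∑ z, |(∫ w, (∑ x, if g w x = z then φ x else 0) ∂P) -
          (∫ w, (∑ x, if g w x = z then ψ x else 0) ∂P)|
      = (1 / 2) * ∑ z, |∫ w, ((∑ x, if g w x = z then φ x else 0) -
          ∑ x, if g w x = z then ψ x else 0) ∂P| := by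
        simp only [integral_sub (hint φ _) (hint ψ _)]
    _ ≤ (1 / 2) * ∑ z, ∫ w, |(∑ x, if g w x = z then φ x else 0) -
          ∑ x, if g w x = z then ψ x else 0| ∂P := by
        gcongr
        exact abs_integral_le_integral_abs
    _ = ∫ w, (1 / 2) * ∑ z, |(∑ x, if g w x = z then φ x else 0) -
          ∑ x, if g w x = z then ψ x else 0| ∂P := by
        rw [integral_const_mul, integral_finsetSum _ fun z _ => hint_abs z]
    _ ≤ _ := by
        refine integral_mono ?_ ?_ fun w => ?_
        · exact (integrable_finsetSum _ fun z _ => hint_abs z).const_mul _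
        · exact integrable_comp_of_measurable_top hΛ fun L => (1 / 2) * ∑ η : {v // v ∈ L} → S,
            |(∑ x : V → S, if (∀ v : {v // v ∈ L}, x v.1 = η v) then φ x else 0) -
              (∑ x : V → S, if (∀ v : {v // v ∈ L}, x v.1 = η v) then ψ x else 0)|
        · gcongr
          exact sum_abs_pushforward_sub_le_marginal (g w) (Λ w) (hsupp w) φ ψ

theorem stmt_4 {W : Type*} [MeasurableSpace W] (P : Measure W) [IsProbabilityMeasure P]
    {S V : Type*} [Fintype S] [Fintype V] [Nonempty S] [Nonempty V]
    [DecidableEq S] [DecidableEq V]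
    (g : W → (V → S) → (V → S)) (Λ : W → Finset V)
    (hg : @Measurable W ((V → S) → (V → S)) _ ⊤ g)
    (hΛ : @Measurable W (Finset V) _ ⊤ Λ)
    (hsupp : ∀ w, ∀ x y : V → S, (∀ v ∈ Λ w, x v = y v) → g w x = g w y)
    (φ ψ : (V → S) → ℝ)
    (hφ0 : ∀ x, 0 ≤ φ x) (hφ1 : ∑ x, φ x = 1)
    (hψ0 : ∀ x, 0 ≤ ψ x) (hψ1 : ∑ x, ψ x = 1) :
    (1 / 2) * ∑ z : V → S,
        |(∫ w, (∑ x : V → S, if g w x = z then φ x else 0) ∂P) -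
          (∫ w, (∑ x : V → S, if g w x = z then ψ x else 0) ∂P)| ≤
      ∫ w, (1 / 2) * ∑ η : {v // v ∈ Λ w} → S,
          |(∑ x : V → S, if (∀ v : {v // v ∈ Λ w}, x v.1 = η v) then φ x else 0) -
            (∑ x : V → S, if (∀ v : {v // v ∈ Λ w}, x v.1 = η v) then ψ x else 0)| ∂P :=
  stmt_4_general P g Λ hg hΛ hsupp φ ψ
end
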